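/- Let D be an oriented graph, let T be a subdigraph of D that is a tournament, and let S be a minimum hull set of D in the P3 convexity. Then |S ∩ V(T)| ≤ 2. -/

import Mathlib

/-! Basic machinery for convexity on oriented graphs. -/

/-- A directed walk along the arc relation `A` from `u` to `v`,
recorded as the (nonempty) list of its vertices. Its length is `l.length - 1`. -/
def DiWalk {V : Type*} (A : V → V → Prop) (u v : V) (l : List V) : Prop :=
  l.head? = some u ∧ l.getLast? = some v ∧ l.Chain' A

/-- A shortest directed walk (geodesic) from `u` to `v`:
a directed walk of minimum length among all directed `(u,v)`-walks. -/
def IsGeodesic {V : Type*} (A : V → V → Prop) (u v : V) (l : List V) : Prop :=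
  DiWalk A u v l ∧ ∀ l', DiWalk A u v l' → l.length ≤ l'.length

/-- Geodetic interval: `u`, `v`, and all vertices lying on a shortest directed
`(u,v)`-path or on a shortest directed `(v,u)`-path. -/
def geoInterval {V : Type*} (A : V → V → Prop) (u v : V) : Set V :=
  {u, v} ∪ {w | (∃ l, IsGeodesic A u v l ∧ w ∈ l) ∨ (∃ l, IsGeodesic A v u l ∧ w ∈ l)}

/-- P3 interval: `u`, `v`, and all vertices lying on a directed `(u,v)`- or
`(v,u)`-path of length two. -/
def p3Interval {V : Type*} (A : V → V → Prop) (u v : V) : Set V :=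
  {u, v} ∪ {w | (A u w ∧ A w v) ∨ (A v w ∧ A w u)}

/-- P3* interval: `u`, `v`, and all vertices lying on a shortest directed `(u,v)`- or
`(v,u)`-path of length two (i.e. the corresponding endpoints are not adjacent). -/
def p3sInterval {V : Type*} (A : V → V → Prop) (u v : V) : Set V :=
  {u, v} ∪ {w | (A u w ∧ A w v ∧ ¬ A u v) ∨ (A v w ∧ A w u ∧ ¬ A v u)}

/-- A set is convex for the interval function `I` if it is closed under `I`. -/
def IsConvexSet {V : Type*} (I : V → V → Set V) (C : Set V) : Prop :=
  ∀ u ∈ C, ∀ v ∈ C, I u v ⊆ C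

/-- The convex hull of `S`: the smallest convex set containing `S`. -/
def convexHullD {V : Type*} (I : V → V → Set V) (S : Set V) : Set V :=
  ⋂₀ {C | IsConvexSet I C ∧ S ⊆ C}

/-- `S` is an interval set if applying `I` to pairs of `S` covers all vertices. -/
def IsIntervalSet {V : Type*} (I : V → V → Set V) (S : Set V) : Prop :=
  (⋃ u ∈ S, ⋃ v ∈ S, I u v) = Set.univ

/-- `S` is a hull set if its convex hull is the whole vertex set. -/
def IsHullSet {V : Type*} (I : V → V → Set V) (S : Set V) : Prop :=
  convexHullD I S = Set.univ

/-- The interval number: minimum cardinality of an interval set. -/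
noncomputable def intervalNumber {V : Type*} (I : V → V → Set V) : ℕ :=
  sInf {k | ∃ S : Set V, IsIntervalSet I S ∧ S.ncard = k}

/-- The hull number: minimum cardinality of a hull set. -/
noncomputable def hullNumber {V : Type*} (I : V → V → Set V) : ℕ :=
  sInf {k | ∃ S : Set V, IsHullSet I S ∧ S.ncard = k}

/-- `v` is reachable from `u` by a directed walk. -/
def Reach {V : Type*} (A : V → V → Prop) (u v : V) : Prop :=
  ∃ l, DiWalk A u v l

/-- An oriented graph: no loops and at most one arc between any two vertices. -/
def IsOriented {V : Type*} (A : V → V → Prop) : Prop :=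
  ∀ u v, A u v → ¬ A v u

/-- Strong connectivity. -/
def StronglyConnected {V : Type*} (A : V → V → Prop) : Prop :=
  ∀ u v, Reach A u v

/-- Connectivity of the underlying undirected graph. -/
def ConnectedD {V : Type*} (A : V → V → Prop) : Prop :=
  ∀ u v : V, Reach (fun a b => A a b ∨ A b a) u v

/-- A strong component: an equivalence class of mutual reachability. -/
def IsStrongComponent {V : Type*} (A : V → V → Prop) (C : Set V) : Prop :=
  ∃ v, C = {u | Reach A u v ∧ Reach A v u}

/-- A sink strong component: a strong component with no arc leaving it. -/
def IsSinkComponent {V : Type*} (A : V → V → Prop) (C : Set V) : Prop :=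
  IsStrongComponent A C ∧ ∀ u ∈ C, ∀ w, w ∉ C → ¬ A u w

/-- A source strong component: a strong component with no arc entering it. -/
def IsSourceComponent {V : Type*} (A : V → V → Prop) (C : Set V) : Prop :=
  IsStrongComponent A C ∧ ∀ u ∈ C, ∀ w, w ∉ C → ¬ A w u

/-- The out-section of `u`: all vertices reachable from `u`. -/
def outSection {V : Type*} (A : V → V → Prop) (u : V) : Set V :=
  {w | Reach A u w}

/-- The in-section of `u`: all vertices from which `u` is reachable. -/
def inSection {V : Type*} (A : V → V → Prop) (u : V) : Set V :=
  {w | Reach A w u}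

/-- A tournament: an oriented graph where every two distinct vertices are adjacent. -/
def IsTournament {V : Type*} (A : V → V → Prop) : Prop :=
  (∀ u v, A u v → ¬ A v u) ∧ ∀ u v : V, u ≠ v → A u v ∨ A v u

/-- The number of arcs of the digraph given by `A`. -/
noncomputable def arcCount {V : Type*} (A : V → V → Prop) : ℕ :=
  Nat.card {p : V × V // A p.1 p.2}

/-!
Any three vertices of a tournament span a directed path `x → y → z`, so `y` lies in the P3
interval of `x` and `z`. Then `y` is recovered in the hull of the remaining vertices of a hull set
containing all three, so dropping it leaves a smaller hull set, which cannot happen for a minimum one.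
-/

section Hull

variable {V : Type*} (I : V → V → Set V)

lemma isConvexSet_convexHullD (S : Set V) : IsConvexSet I (convexHullD I S) :=
  fun _ hu _ hv _ hw _ hC => hC.1 _ (hu _ hC) _ (hv _ hC) hw

lemma subset_convexHullD (S : Set V) : S ⊆ convexHullD I S :=
  fun _ hx _ hC => hC.2 hx

lemma convexHullD_subset {S C : Set V} (hC : IsConvexSet I C) (hSC : S ⊆ C) :
    convexHullD I S ⊆ C :=
  Set.sInter_subset_of_mem ⟨hC, hSC⟩

variable {I}

lemma IsHullSet.diff_singleton {S : Set V} (hS : IsHullSet I S) {x y z : V}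
    (hx : x ∈ S) (hz : z ∈ S) (hxy : x ≠ y) (hzy : z ≠ y) (hy : y ∈ I x z) :
    IsHullSet I (S \ {y}) := by
  have hy' : y ∈ convexHullD I (S \ {y}) :=
    isConvexSet_convexHullD I _ x (subset_convexHullD I (S \ {y}) ⟨hx, hxy⟩)
      z (subset_convexHullD I (S \ {y}) ⟨hz, hzy⟩) hy
  have hS_sub : S ⊆ convexHullD I (S \ {y}) := fun w hw => by
    by_cases hwy : w = y
    · exact hwy ▸ hy'
    · exact subset_convexHullD I _ ⟨hw, hwy⟩
  refine Set.eq_univ_of_univ_subset ?_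
  rw [← hS]
  exact convexHullD_subset I (isConvexSet_convexHullD I _) hS_sub

lemma hullNumber_le_ncard {S : Set V} (hS : IsHullSet I S) : hullNumber I ≤ S.ncard :=
  Nat.sInf_le ⟨S, hS, rfl⟩

lemma notMem_interval_of_ncard_eq_hullNumber [Finite V] {S : Set V} (hS : IsHullSet I S)
    (hmin : S.ncard = hullNumber I) {x y z : V} (hx : x ∈ S) (hy : y ∈ S) (hz : z ∈ S)
    (hxy : x ≠ y) (hzy : z ≠ y) : y ∉ I x z := fun hyI => by
  have hle := hullNumber_le_ncard (hS.diff_singleton hx hz hxy hzy hyI)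
  have hlt := Set.ncard_sdiff_singleton_lt_of_mem hy
  omega

end Hull

lemma mem_p3Interval_of_adj {V : Type*} {A : V → V → Prop} {x y z : V}
    (hxy : A x y) (hyz : A y z) : y ∈ p3Interval A x z :=
  Or.inr (Or.inl ⟨hxy, hyz⟩)

lemma exists_adj_adj_of_two_lt_ncard {V : Type*} {R : V → V → Prop} {s : Set V}
    (hs : 2 < s.ncard) (hadj : ∀ u ∈ s, ∀ v ∈ s, u ≠ v → R u v ∨ R v u) :
    ∃ x ∈ s, ∃ y ∈ s, ∃ z ∈ s, x ≠ y ∧ z ≠ y ∧ R x y ∧ R y z := by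
  obtain ⟨a, ha, b, hb, c, hc, hab, hac, hbc⟩ :=
    (Set.two_lt_ncard (Set.finite_of_ncard_pos (by omega))).1 hs
  rcases hadj a ha b hb hab with hab' | hba' <;>
  rcases hadj b hb c hc hbc with hbc' | hcb' <;>
  rcases hadj a ha c hc hac with hac' | hca'
  all_goals first
    | exact ⟨a, ha, b, hb, c, hc, hab, hbc.symm, hab', hbc'⟩
    | exact ⟨a, ha, c, hc, b, hb, hac, hbc, hac', hcb'⟩
    | exact ⟨c, hc, a, ha, b, hb, hac.symm, hab.symm, hca', hab'⟩
    | exact ⟨b, hb, a, ha, c, hc, hab.symm, hac.symm, hba', hac'⟩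
    | exact ⟨b, hb, c, hc, a, ha, hbc, hac, hbc', hca'⟩
    | exact ⟨c, hc, b, hb, a, ha, hbc.symm, hab, hcb', hba'⟩

theorem stmt_13_general {V : Type*} [Finite V] (A : V → V → Prop)
    (W : Set V) (A' : V → V → Prop)
    (hsub : ∀ u v, A' u v → A u v ∧ u ∈ W ∧ v ∈ W)
    (hT : IsTournament (fun a b : W => A' a.1 b.1))
    (S : Set V) (hS : IsHullSet (p3Interval A) S)
    (hmin : S.ncard = hullNumber (p3Interval A)) :
    (S ∩ W).ncard ≤ 2 := by
  by_contra! h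
  have hadj : ∀ u ∈ S ∩ W, ∀ v ∈ S ∩ W, u ≠ v → A u v ∨ A v u := fun u hu v hv huv =>
    (hT.2 ⟨u, hu.2⟩ ⟨v, hv.2⟩ (fun h => huv (congrArg Subtype.val h))).imp
      (fun h => (hsub u v h).1) (fun h => (hsub v u h).1)
  obtain ⟨x, hx, y, hy, z, hz, hxy, hzy, hxy', hyz'⟩ := exists_adj_adj_of_two_lt_ncard h hadj
  exact notMem_interval_of_ncard_eq_hullNumber hS hmin hx.1 hy.1 hz.1 hxy hzy
    (mem_p3Interval_of_adj hxy' hyz')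

/-- If `T` (vertex set `W`, arc relation `A'`) is a subdigraph of
`D` that is a tournament and `S` is a minimum P3 hull set of `D`, then
`|S ∩ W| ≤ 2`. -/
theorem stmt_13 {V : Type*} [Finite V] (A : V → V → Prop) (hA : IsOriented A)
    (W : Set V) (A' : V → V → Prop)
    (hsub : ∀ u v, A' u v → A u v ∧ u ∈ W ∧ v ∈ W)
    (hT : IsTournament (fun a b : W => A' a.1 b.1))
    (S : Set V) (hS : IsHullSet (p3Interval A) S)
    (hmin : S.ncard = hullNumber (p3Interval A)) :
    (S ∩ W).ncard ≤ 2 :=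
  stmt_13_general A W A' hsub hT S hS hmin
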